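/- arXiv:2504.09745 — 2 statements merged into one kernel-verified Lean document; each statement's English description precedes it below -/
import Mathlib

section
/- Let f : E → ℝ be a differentiable, λ-strongly convex and L-smooth function on a finite-dimensional real inner product space E, with 0 < λ ≤ L, and let x* be a point with ∇f(x*) = 0. If 0 < η < 1/L, then for every x ∈ E, one gradient-descent step contracts the distance to x*: ‖x − η∇f(x) − x*‖ ≤ (1 − ηλ)‖x − x*‖. -/
/-!
Subtracting `λ/2 ‖·‖²` from `f` leaves a convex function with an `(L - λ)`-quadratic upper
bound, whose gradient is therefore co-coercive. This gives the interpolation inequality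
`‖∇f x - ∇f y‖² + λL ‖x - y‖² ≤ (λ + L) ⟪∇f x - ∇f y, x - y⟫`. Expanding
`‖(x - x*) - η ∇f x‖²` with `∇f x* = 0`, this inequality together with strong monotonicity
`λ ‖x - x*‖² ≤ ⟪∇f x, x - x*⟫` bounds it by `(1 - ηλ)² ‖x - x*‖²` as soon as `η (λ + L) ≤ 2`.
-/

open scoped RealInnerProductSpace

section QuadraticBounds

variable {E : Type*} [NormedAddCommGroup E] [InnerProductSpace ℝ E]

theorem mul_norm_sub_sq_le_inner_of_strongly_convex {φ : E → ℝ} {G : E → E} {lam : ℝ}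
    (hsc : ∀ x y, φ y ≥ φ x + ⟪G x, y - x⟫ + lam / 2 * ‖y - x‖ ^ 2) (x y : E) :
    lam * ‖x - y‖ ^ 2 ≤ ⟪G x - G y, x - y⟫ := by
  have hxy := hsc x y
  have hyx := hsc y x
  rw [← neg_sub x y, inner_neg_right, norm_neg] at hxy
  rw [inner_sub_left]
  linarith

theorem add_inner_add_norm_sub_sq_div_le {φ : E → ℝ} {G : E → E} {M : ℝ} (hM : 0 < M)
    (hlow : ∀ x y, φ x + ⟪G x, y - x⟫ ≤ φ y)
    (hup : ∀ x y, φ y ≤ φ x + ⟪G x, y - x⟫ + M / 2 * ‖y - x‖ ^ 2) (x y : E) :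
    φ x + ⟪G x, y - x⟫ + ‖G y - G x‖ ^ 2 / (2 * M) ≤ φ y := by
  generalize hu : G y - G x = u
  -- Compare both bounds at the point reached by a gradient step of length `1 / M` from `y`.
  have hlow_z := hlow x (y - M⁻¹ • u)
  have hup_z := hup y (y - M⁻¹ • u)
  rw [sub_right_comm, inner_sub_right, real_inner_smul_right] at hlow_z
  rw [sub_sub_cancel_left, inner_neg_right, real_inner_smul_right, norm_neg, norm_smul, mul_pow,
    Real.norm_eq_abs, sq_abs] at hup_z
  have hstep : M⁻¹ * ⟪G y, u⟫ - M⁻¹ * ⟪G x, u⟫ = 2 * (‖u‖ ^ 2 / (2 * M)) := by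
    rw [← mul_sub, ← inner_sub_left, hu, real_inner_self_eq_norm_sq]
    field_simp
  have hM : M / 2 * (M⁻¹ ^ 2 * ‖u‖ ^ 2) = ‖u‖ ^ 2 / (2 * M) := by
    field_simp
  linarith

theorem norm_sub_sq_le_mul_inner_of_quadratic_bounds {φ : E → ℝ} {G : E → E} {M : ℝ}
    (hM : 0 < M) (hlow : ∀ x y, φ x + ⟪G x, y - x⟫ ≤ φ y)
    (hup : ∀ x y, φ y ≤ φ x + ⟪G x, y - x⟫ + M / 2 * ‖y - x‖ ^ 2) (x y : E) :
    ‖G x - G y‖ ^ 2 ≤ M * ⟪G x - G y, x - y⟫ := by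
  have hxy := add_inner_add_norm_sub_sq_div_le hM hlow hup x y
  have hyx := add_inner_add_norm_sub_sq_div_le hM hlow hup y x
  rw [norm_sub_rev] at hxy
  rw [← neg_sub y x, inner_neg_right] at hyx
  have hsum : ‖G x - G y‖ ^ 2 / (2 * M) * 2 ≤ ⟪G x - G y, x - y⟫ := by
    rw [inner_sub_left, ← neg_sub y x, inner_neg_right, inner_neg_right]
    linarith
  calc ‖G x - G y‖ ^ 2 = M * (‖G x - G y‖ ^ 2 / (2 * M) * 2) := by field_simp
    _ ≤ M * ⟪G x - G y, x - y⟫ := by gcongr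

theorem norm_sub_smul_le_of_inner_bounds {d g : E} {lam L η : ℝ}
    (hcoer : ‖g‖ ^ 2 + lam * L * ‖d‖ ^ 2 ≤ (lam + L) * ⟪g, d⟫) (hmono : lam * ‖d‖ ^ 2 ≤ ⟪g, d⟫)
    (hη : 0 ≤ η) (hηsum : η * (lam + L) ≤ 2) (hηlam : η * lam ≤ 1) :
    ‖d - η • g‖ ≤ (1 - η * lam) * ‖d‖ := by
  have hexpand : ‖d - η • g‖ ^ 2 = ‖d‖ ^ 2 - 2 * η * ⟪g, d⟫ + η ^ 2 * ‖g‖ ^ 2 := by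
    rw [norm_sub_sq_real, real_inner_smul_right, norm_smul, Real.norm_eq_abs, mul_pow, sq_abs,
      real_inner_comm]
    ring
  have hsq : ‖d - η • g‖ ^ 2 ≤ ((1 - η * lam) * ‖d‖) ^ 2 := by
    rw [hexpand]
    nlinarith [mul_le_mul_of_nonneg_left hcoer (sq_nonneg η),
      mul_le_mul_of_nonneg_left hmono (mul_nonneg hη (sub_nonneg.2 hηsum))]
  exact (sq_le_sq₀ (norm_nonneg _) (mul_nonneg (sub_nonneg.2 hηlam) (norm_nonneg _))).1 hsq

end QuadraticBounds

section Gradient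

variable {E : Type*} [NormedAddCommGroup E] [InnerProductSpace ℝ E] [CompleteSpace E]
  {f : E → ℝ}

theorem hasDerivAt_apply_add_smul (hf : Differentiable ℝ f) (x d : E) (t : ℝ) :
    HasDerivAt (fun s : ℝ => f (x + s • d)) ⟪gradient f (x + t • d), d⟫ t := by
  have hline : HasDerivAt (fun s : ℝ => x + s • d) d t := by
    simpa using ((hasDerivAt_id t).smul_const d).const_add x
  simpa [Function.comp_def] using (hf _).hasGradientAt.hasFDerivAt.comp_hasDerivAt t hline

theorem le_add_inner_gradient_add_sq_of_lipschitz {L : ℝ} (hf : Differentiable ℝ f)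
    (hL : ∀ x y, ‖gradient f x - gradient f y‖ ≤ L * ‖x - y‖) (x y : E) :
    f y ≤ f x + ⟪gradient f x, y - x⟫ + L / 2 * ‖y - x‖ ^ 2 := by
  set d := y - x
  -- The gap to the quadratic model along the segment is antitone, by the Lipschitz bound.
  let φ : ℝ → ℝ := fun t => f (x + t • d) - t * ⟪gradient f x, d⟫ - L / 2 * t ^ 2 * ‖d‖ ^ 2
  let φ' : ℝ → ℝ := fun t => ⟪gradient f (x + t • d) - gradient f x, d⟫ - L * t * ‖d‖ ^ 2
  have hφ : ∀ t, HasDerivAt φ (φ' t) t := fun t => by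
    refine (((hasDerivAt_apply_add_smul hf x d t).sub
      ((hasDerivAt_id t).mul_const ⟪gradient f x, d⟫)).sub
      (((hasDerivAt_pow 2 t).const_mul (L / 2)).mul_const (‖d‖ ^ 2))).congr_deriv ?_
    simp only [φ', inner_sub_left]
    ring
  have hφ'_nonpos : ∀ t ∈ interior (Set.Ici (0 : ℝ)), φ' t ≤ 0 := fun t ht => by
    rw [interior_Ici] at ht
    have hlip : ‖gradient f (x + t • d) - gradient f x‖ ≤ L * (t * ‖d‖) := by
      simpa [norm_smul, abs_of_pos (Set.mem_Ioi.1 ht)] using hL (x + t • d) x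
    have := real_inner_le_norm (gradient f (x + t • d) - gradient f x) d
    nlinarith [mul_le_mul_of_nonneg_right hlip (norm_nonneg d)]
  have hanti : AntitoneOn φ (Set.Ici 0) :=
    antitoneOn_of_hasDerivWithinAt_nonpos (convex_Ici 0)
      (fun t _ => (hφ t).continuousAt.continuousWithinAt)
      (fun t _ => (hφ t).hasDerivWithinAt) hφ'_nonpos
  have := hanti (Set.mem_Ici.2 le_rfl) (Set.mem_Ici.2 zero_le_one) zero_le_one
  simp only [φ, d, one_smul, zero_smul, add_zero, add_sub_cancel, one_pow, one_mul, zero_mul,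
    ne_eq, OfNat.ofNat_ne_zero, not_false_eq_true, zero_pow, mul_zero, sub_zero] at this
  linarith

theorem norm_gradient_sub_sq_add_mul_le_inner {lam L : ℝ} (hf : Differentiable ℝ f)
    (hsc : ∀ x y, f y ≥ f x + ⟪gradient f x, y - x⟫ + lam / 2 * ‖y - x‖ ^ 2)
    (hL : ∀ x y, ‖gradient f x - gradient f y‖ ≤ L * ‖x - y‖) (hlamL : lam ≤ L) (hL0 : 0 ≤ L)
    (x y : E) :
    ‖gradient f x - gradient f y‖ ^ 2 + lam * L * ‖x - y‖ ^ 2 ≤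
      (lam + L) * ⟪gradient f x - gradient f y, x - y⟫ := by
  have hmono := mul_norm_sub_sq_le_inner_of_strongly_convex hsc x y
  rcases hlamL.eq_or_lt with rfl | hlt
  · have hlip := hL x y
    nlinarith [mul_le_mul hlip hlip (norm_nonneg _) (mul_nonneg hL0 (norm_nonneg _)),
      mul_le_mul_of_nonneg_left hmono hL0]
  have hquad : ∀ x y : E,
      lam / 2 * ‖y - x‖ ^ 2 = lam / 2 * ‖y‖ ^ 2 - lam / 2 * ‖x‖ ^ 2 - lam * ⟪x, y - x⟫ := by
    intro x y
    rw [← sub_add_cancel y x, add_sub_cancel_right, norm_add_sq_real, real_inner_comm]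
    ring
  have hcoer := norm_sub_sq_le_mul_inner_of_quadratic_bounds (sub_pos.2 hlt)
    (φ := fun z => f z - lam / 2 * ‖z‖ ^ 2) (G := fun z => gradient f z - lam • z)
    (fun x y => by
      simp only [inner_sub_left, real_inner_smul_left]
      linarith [hsc x y, hquad x y])
    (fun x y => by
      simp only [inner_sub_left, real_inner_smul_left]
      linarith [le_add_inner_gradient_add_sq_of_lipschitz hf hL x y, hquad x y])
    x y
  rw [show gradient f x - lam • x - (gradient f y - lam • y) =
      (gradient f x - gradient f y) - lam • (x - y) by rw [smul_sub]; abel] at hcoer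
  generalize gradient f x - gradient f y = g at hcoer ⊢
  generalize x - y = d at hcoer ⊢
  simp only [norm_sub_sq_real, inner_sub_left, real_inner_smul_left, real_inner_smul_right,
    norm_smul, Real.norm_eq_abs, mul_pow, sq_abs, real_inner_self_eq_norm_sq] at hcoer
  linear_combination hcoer

end Gradient

theorem gradient_descent_step_contraction_general
    {E : Type*} [NormedAddCommGroup E] [InnerProductSpace ℝ E] [FiniteDimensional ℝ E]
    (f : E → ℝ) (lam L η : ℝ)
    (hdiff : Differentiable ℝ f)
    (hlamL : lam ≤ L)
    (hsc : ∀ x y : E, f y ≥ f x + inner ℝ (gradient f x) (y - x) + (lam / 2) * ‖y - x‖ ^ 2)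
    (hsmooth : ∀ x y : E, ‖gradient f x - gradient f y‖ ≤ L * ‖x - y‖)
    (xstar : E) (hstar : gradient f xstar = 0)
    (hη : 0 < η) (hηL : η < 1 / L) :
    ∀ x : E, ‖x - η • gradient f x - xstar‖ ≤ (1 - η * lam) * ‖x - xstar‖ := by
  intro x
  have hL : 0 < L := one_div_pos.1 (hη.trans hηL)
  have hηL' : η * L < 1 := (lt_div_iff₀ hL).1 hηL
  have hstep := norm_sub_smul_le_of_inner_bounds
    (norm_gradient_sub_sq_add_mul_le_inner hdiff hsc hsmooth hlamL hL.le x xstar)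
    (mul_norm_sub_sq_le_inner_of_strongly_convex hsc x xstar) hη.le
    (by nlinarith) (by nlinarith)
  rwa [hstar, sub_zero, ← sub_right_comm] at hstep

/-- One gradient-descent step on a `λ`-strongly convex and `L`-smooth function
contracts the distance to the stationary point `xstar` by a factor `1 - η * λ`. -/
theorem gradient_descent_step_contraction
    {E : Type*} [NormedAddCommGroup E] [InnerProductSpace ℝ E] [FiniteDimensional ℝ E]
    (f : E → ℝ) (lam L η : ℝ)
    (hdiff : Differentiable ℝ f)
    (hlam : 0 < lam) (hlamL : lam ≤ L)
    (hsc : ∀ x y : E, f y ≥ f x + inner ℝ (gradient f x) (y - x) + (lam / 2) * ‖y - x‖ ^ 2)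
    (hsmooth : ∀ x y : E, ‖gradient f x - gradient f y‖ ≤ L * ‖x - y‖)
    (xstar : E) (hstar : gradient f xstar = 0)
    (hη : 0 < η) (hηL : η < 1 / L) :
    ∀ x : E, ‖x - η • gradient f x - xstar‖ ≤ (1 - η * lam) * ‖x - xstar‖ :=
  gradient_descent_step_contraction_general f lam L η hdiff hlamL hsc hsmooth xstar hstar hη hηL
end

section
/- (Optimality of the closed-form power allocation for problem P^{psub2}.) Let n ≥ 1, let c > 0, and let g, d, P̄ ∈ ℝ^n have all entries strictly positive. Let β := min_{k} √(c g_k / d_k) and let k' be an index attaining this minimum. Define p* ∈ ℝ^n by p*_k = P̄_k for k ≠ k' and p*_{k'} = P̄_{k'} − max(gᵀP̄ − β, 0)/g_{k'}, and assume p*_{k'} ≥ 0. Then p* minimizes f(p) := c/(gᵀp) + dᵀp over the feasible set { p ∈ ℝ^n : 0 ≤ p_k ≤ P̄_k for all k, and gᵀp > 0 }; that is, f(p*) ≤ f(p) for every p in this set. -/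
open Finset

private lemma key_scalar_ineq (c r β S s M : ℝ) (hc : 0 < c) (hr : 0 < r)
    (hβ : 0 < β) (hS : 0 < S) (hM : M = max (S - β) 0) (hcr : r * β ^ 2 = c)
    (hs : 0 < s) (hsS : s ≤ S) :
    c / (S - M) + r * (S - M) ≤ c / s + r * s := by
  set a := S - M with ha
  have hapos : 0 < a := by
    rw [ha, hM]
    rcases le_total β S with h | h
    · rw [max_eq_left (by linarith)]; linarith
    · rw [max_eq_right (by linarith)]; linarith
  have hdiff : c / s + r * s - (c / a + r * a) = (s - a) * (r * s * a - c) / (s * a) := by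
    field_simp
    ring
  have hnum : 0 ≤ (s - a) * (r * s * a - c) := by
    rcases le_total β S with hcase | hcase
    · have haβ : a = β := by rw [ha, hM, max_eq_left (by linarith)]; ring
      rw [haβ, ← hcr]
      nlinarith [sq_nonneg (s - β), mul_nonneg (mul_pos hr hβ).le (sq_nonneg (s - β))]
    · have haS : a = S := by rw [ha, hM, max_eq_right (by linarith)]; ring
      rw [haS, ← hcr]
      have h1 : 0 ≤ S - s := by linarith
      have h2 : s * S ≤ β * β :=
        mul_le_mul (le_trans hsS hcase) hcase hS.le hβ.le
      nlinarith [mul_nonneg h1 (mul_nonneg hr.le (by nlinarith : 0 ≤ β ^ 2 - s * S))]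
  have hq : 0 ≤ (s - a) * (r * s * a - c) / (s * a) :=
    div_nonneg hnum (mul_pos hs hapos).le
  linarith [hdiff, hq]

/-- Optimality of the closed-form power allocation for `P^{psub2}`: with
`β = min_k √(c g_k / d_k)` attained at device `k'`, the allocation that gives
every other device its full budget and device `k'` the reduced power
`P̄_{k'} - [gᵀP̄ - β]⁺ / g_{k'}` minimizes `c/(gᵀp) + dᵀp` over the box
`0 ≤ p ≤ P̄` intersected with `{gᵀp > 0}`. -/
theorem power_allocation_optimal
    (n : ℕ) (hn : 1 ≤ n) (c : ℝ) (hc : 0 < c)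
    (g d Pbar : Fin n → ℝ)
    (hg : ∀ k, 0 < g k) (hd : ∀ k, 0 < d k) (hPbar : ∀ k, 0 < Pbar k)
    (β : ℝ) (k' : Fin n)
    (hβ : β = Real.sqrt (c * g k' / d k'))
    (hk'min : ∀ k, Real.sqrt (c * g k' / d k') ≤ Real.sqrt (c * g k / d k))
    (pstar : Fin n → ℝ)
    (hpstar : pstar = Function.update Pbar k'
        (Pbar k' - max ((∑ k, g k * Pbar k) - β) 0 / g k'))
    (hpos : 0 ≤ pstar k') :
    ∀ p : Fin n → ℝ, (∀ k, 0 ≤ p k) → (∀ k, p k ≤ Pbar k) →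
      0 < ∑ k, g k * p k →
      c / (∑ k, g k * pstar k) + ∑ k, d k * pstar k
        ≤ c / (∑ k, g k * p k) + ∑ k, d k * p k := by
  intro p hp0 hpP hs
  haveI : Nonempty (Fin n) := ⟨⟨0, hn⟩⟩
  set S := ∑ k, g k * Pbar k with hS
  set D := ∑ k, d k * Pbar k with hD
  set M := max (S - β) 0 with hM
  set r := d k' / g k' with hr
  set s := ∑ k, g k * p k with hsdef
  have hgk' := hg k'
  have hdk' := hd k'
  have hrpos : 0 < r := by rw [hr]; exact div_pos hdk' hgk'
  have hSpos : 0 < S := by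
    rw [hS]; exact Finset.sum_pos (fun k _ => mul_pos (hg k) (hPbar k)) Finset.univ_nonempty
  clear_value S D M r s
  have hargpos : 0 < c * g k' / d k' := div_pos (mul_pos hc hgk') hdk'
  have hβpos : 0 < β := hβ ▸ Real.sqrt_pos.mpr hargpos
  have hβsq : β ^ 2 = c * g k' / d k' := by
    rw [hβ, Real.sq_sqrt hargpos.le]
  have hcrβ : r * β ^ 2 = c := by
    rw [hβsq, hr]; field_simp
  -- ratio bound: d k ≤ r * g k for all k
  have hratio : ∀ k, d k ≤ r * g k := by
    intro k
    have h1 : c * g k' / d k' ≤ c * g k / d k := by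
      have := hk'min k
      have h2 : 0 ≤ c * g k / d k := (div_pos (mul_pos hc (hg k)) (hd k)).le
      nlinarith [Real.sq_sqrt hargpos.le, Real.sq_sqrt h2, Real.sqrt_nonneg (c * g k' / d k'),
        Real.sqrt_nonneg (c * g k / d k)]
    rw [div_le_div_iff₀ hdk' (hd k)] at h1
    rw [hr, div_mul_eq_mul_div, le_div_iff₀ hgk']
    nlinarith [hd k, hg k]
  -- sums over pstar
  have hsum : ∀ (a : Fin n → ℝ),
      ∑ x, a x * pstar x = (∑ x, a x * Pbar x) - a k' * (M / g k') := by
    intro a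
    have h1 : ∑ x ∈ Finset.univ.erase k', a x * pstar x
        = ∑ x ∈ Finset.univ.erase k', a x * Pbar x :=
      Finset.sum_congr rfl (fun x hx => by
        rw [hpstar, Function.update_of_ne (Finset.ne_of_mem_erase hx)])
    rw [← Finset.sum_erase_add _ _ (Finset.mem_univ k'), h1,
        ← Finset.sum_erase_add Finset.univ (fun x => a x * Pbar x) (Finset.mem_univ k')]
    have h2 : pstar k' = Pbar k' - M / g k' := by rw [hpstar, Function.update_self]
    rw [h2]; ring
  have hgstar : ∑ k, g k * pstar k = S - M := by
    rw [hsum g, ← hS]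
    field_simp
  have hdstar : ∑ k, d k * pstar k = D - r * M := by
    rw [hsum d, ← hD, hr]
    field_simp
  -- s ≤ S
  have hsS : s ≤ S := by
    rw [hsdef, hS]
    exact Finset.sum_le_sum (fun k _ => by have := hpP k; nlinarith [hg k])
  -- lower bound on d·p
  have hdp : D - r * (S - s) ≤ ∑ k, d k * p k := by
    have h1 : ∀ k ∈ Finset.univ, d k * Pbar k - d k * p k
        ≤ r * (g k * Pbar k) - r * (g k * p k) := by
      intro k _
      have h2 : 0 ≤ Pbar k - p k := by linarith [hpP k]
      have h3 := hratio k
      nlinarith [hp0 k, hg k]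
    have h4 := Finset.sum_le_sum h1
    rw [Finset.sum_sub_distrib, Finset.sum_sub_distrib, ← Finset.mul_sum, ← Finset.mul_sum,
      ← hS, ← hD, ← hsdef] at h4
    linarith
  have hkey := key_scalar_ineq c r β S s M hc hrpos hβpos hSpos hM hcrβ hs hsS
  rw [hgstar, hdstar]
  linarith [hdp, hkey]
end
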